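/- Let P be the convex hull of the finite family {P_ij} with P_ij(x,y) = p_i(x)q_j(y|x). Then diam_TV(P) ≤ η_X + min(η*_{Y|X}, (1 − η_X)·η̄_{Y|X}), where η_X = max_{i,i'} d_TV(p_i, p_{i'}), η*_{Y|X} = max_i max_{j,j'} Σ_x p_i(x) d_TV(q_j(·|x), q_{j'}(·|x)), and η̄_{Y|X} = max_x max_{j,j'} d_TV(q_j(·|x), q_{j'}(·|x)). -/

import Mathlib

open Finset

/-!
Total variation is jointly convex, so the distance between two mixtures of the `P i j` is at
most the largest distance between two of them. For a pair of them, write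
`m x = min (p x) (p' x)`; on the fibre over `x`, `p x • q x - p' x • q' x` differs from
`m x • (q x - q' x)` by `|p x - p' x|` times a probability vector, so
`d_TV(P, P') ≤ ∑ x, m x * d_TV(q x, q' x) + d_TV(p, p')`. The sum is at most `η*` (as `m ≤ p'`)
and at most `(1 - d_TV(p, p')) * η̄` (as `∑ x, m x = 1 - d_TV(p, p')`), and
`t ↦ t + (1 - t) * η̄` is monotone because `η̄ ≤ 1`.
-/

noncomputable def tvDist {Z : Type*} [Fintype Z] (μ ν : Z → ℝ) : ℝ := (1 / 2) * ∑ z, |μ z - ν z|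

section TVDist

variable {Z : Type*} [Fintype Z]

lemma tvDist_comm (μ ν : Z → ℝ) : tvDist μ ν = tvDist ν μ := by
  simp only [tvDist, abs_sub_comm]

lemma tvDist_nonneg (μ ν : Z → ℝ) : 0 ≤ tvDist μ ν := by
  unfold tvDist
  positivity

lemma tvDist_le_one {μ ν : Z → ℝ} (hμ0 : ∀ z, 0 ≤ μ z) (hν0 : ∀ z, 0 ≤ ν z)
    (hμ1 : ∑ z, μ z = 1) (hν1 : ∑ z, ν z = 1) : tvDist μ ν ≤ 1 := by
  have h : ∑ z, |μ z - ν z| ≤ ∑ z, (μ z + ν z) :=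
    sum_le_sum fun z _ => abs_sub_le_iff.2 ⟨by linarith [hν0 z], by linarith [hμ0 z]⟩
  rw [sum_add_distrib, hμ1, hν1] at h
  unfold tvDist
  linarith

lemma sum_min_eq_one_sub_tvDist {μ ν : Z → ℝ} (hμ1 : ∑ z, μ z = 1) (hν1 : ∑ z, ν z = 1) :
    ∑ z, min (μ z) (ν z) = 1 - tvDist μ ν := by
  have hmin : ∀ z, min (μ z) (ν z) = (μ z + ν z - |μ z - ν z|) / 2 := fun z => by
    linarith [min_add_max (μ z) (ν z), max_sub_min_eq_abs' (μ z) (ν z)]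
  rw [sum_congr rfl fun z _ => hmin z, ← sum_div, sum_sub_distrib, sum_add_distrib, hμ1, hν1,
    tvDist]
  ring

end TVDist

lemma weighted_sum_le_of_forall_le {K : Type*} [Fintype K] {W : K → ℝ} (hW0 : ∀ k, 0 ≤ W k)
    (hW1 : ∑ k, W k = 1) {g : K → ℝ} {B : ℝ} (hg : ∀ k, g k ≤ B) : ∑ k, W k * g k ≤ B :=
  (sum_le_sum fun k _ => mul_le_mul_of_nonneg_left (hg k) (hW0 k)).trans_eq
    (by rw [← sum_mul, hW1, one_mul])

section Mixture

variable {K Z : Type*} [Fintype K] [Fintype Z]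

lemma tvDist_mix_left_le {W : K → ℝ} (hW0 : ∀ k, 0 ≤ W k) (hW1 : ∑ k, W k = 1)
    (f : K → Z → ℝ) (ν : Z → ℝ) :
    tvDist (fun z => ∑ k, W k * f k z) ν ≤ ∑ k, W k * tvDist (f k) ν := by
  have hdiff : ∀ z, ∑ k, W k * f k z - ν z = ∑ k, W k * (f k z - ν z) := fun z => by
    simp only [mul_sub, sum_sub_distrib, ← sum_mul, hW1, one_mul]
  calc tvDist (fun z => ∑ k, W k * f k z) ν
      ≤ (1 / 2) * ∑ z, ∑ k, W k * |f k z - ν z| := by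
        unfold tvDist
        gcongr with z
        rw [hdiff]
        refine (abs_sum_le_sum_abs _ _).trans_eq (sum_congr rfl fun k _ => ?_)
        rw [abs_mul, abs_of_nonneg (hW0 k)]
    _ = ∑ k, W k * tvDist (f k) ν := by
        simp only [tvDist, mul_sum]
        rw [sum_comm]
        exact sum_congr rfl fun k _ => sum_congr rfl fun z _ => by ring

lemma tvDist_mix_le_of_forall_le {W W' : K → ℝ} (hW0 : ∀ k, 0 ≤ W k) (hW1 : ∑ k, W k = 1)
    (hW'0 : ∀ k, 0 ≤ W' k) (hW'1 : ∑ k, W' k = 1) (f : K → Z → ℝ) {B : ℝ}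
    (hB : ∀ k k', tvDist (f k) (f k') ≤ B) :
    tvDist (fun z => ∑ k, W k * f k z) (fun z => ∑ k, W' k * f k z) ≤ B :=
  (tvDist_mix_left_le hW0 hW1 f _).trans <| weighted_sum_le_of_forall_le hW0 hW1 fun k => by
    rw [tvDist_comm]
    exact (tvDist_mix_left_le hW'0 hW'1 f _).trans
      (weighted_sum_le_of_forall_le hW'0 hW'1 fun k' => hB k' k)

end Mixture

section Product

variable {X Y : Type*} [Fintype X] [Fintype Y]

lemma tvDist_mul_le_of_le {a b : ℝ} (ha : 0 ≤ a) (hab : a ≤ b) (u : Y → ℝ) {v : Y → ℝ}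
    (hv0 : ∀ y, 0 ≤ v y) (hv1 : ∑ y, v y = 1) :
    tvDist (fun y => a * u y) (fun y => b * v y) ≤ a * tvDist u v + (b - a) / 2 := by
  have hy : ∀ y, |a * u y - b * v y| ≤ a * |u y - v y| + (b - a) * v y := fun y => by
    calc |a * u y - b * v y| = |a * (u y - v y) - (b - a) * v y| := by ring_nf
      _ ≤ |a * (u y - v y)| + |(b - a) * v y| := abs_sub _ _
      _ = a * |u y - v y| + (b - a) * v y := by
        rw [abs_mul, abs_mul, abs_of_nonneg ha, abs_of_nonneg (hv0 y),
          abs_of_nonneg (sub_nonneg.2 hab)]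
  have hsum := sum_le_sum fun y (_ : y ∈ univ) => hy y
  rw [sum_add_distrib, ← mul_sum, ← mul_sum, hv1, mul_one] at hsum
  unfold tvDist
  linarith

lemma tvDist_mul_le {a b : ℝ} (ha : 0 ≤ a) (hb : 0 ≤ b) {u v : Y → ℝ}
    (hu0 : ∀ y, 0 ≤ u y) (hv0 : ∀ y, 0 ≤ v y) (hu1 : ∑ y, u y = 1) (hv1 : ∑ y, v y = 1) :
    tvDist (fun y => a * u y) (fun y => b * v y) ≤ min a b * tvDist u v + |a - b| / 2 := by
  rcases le_total a b with hab | hba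
  · rw [min_eq_left hab, abs_sub_comm, abs_of_nonneg (sub_nonneg.2 hab)]
    exact tvDist_mul_le_of_le ha hab u hv0 hv1
  · rw [min_eq_right hba, abs_of_nonneg (sub_nonneg.2 hba), tvDist_comm, tvDist_comm u]
    exact tvDist_mul_le_of_le hb hba v hu0 hu1

lemma tvDist_prod_le {p p' : X → ℝ} {q q' : X → Y → ℝ} (hp0 : ∀ x, 0 ≤ p x)
    (hp'0 : ∀ x, 0 ≤ p' x) (hq0 : ∀ x y, 0 ≤ q x y) (hq'0 : ∀ x y, 0 ≤ q' x y)
    (hq1 : ∀ x, ∑ y, q x y = 1) (hq'1 : ∀ x, ∑ y, q' x y = 1) :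
    tvDist (fun z : X × Y => p z.1 * q z.1 z.2) (fun z => p' z.1 * q' z.1 z.2)
      ≤ ∑ x, min (p x) (p' x) * tvDist (q x) (q' x) + tvDist p p' :=
  calc tvDist (fun z : X × Y => p z.1 * q z.1 z.2) (fun z => p' z.1 * q' z.1 z.2)
      = ∑ x, tvDist (fun y => p x * q x y) (fun y => p' x * q' x y) := by
        simp only [tvDist, Fintype.sum_prod_type, mul_sum]
    _ ≤ ∑ x, (min (p x) (p' x) * tvDist (q x) (q' x) + |p x - p' x| / 2) :=
        sum_le_sum fun x _ =>
          tvDist_mul_le (hp0 x) (hp'0 x) (hq0 x) (hq'0 x) (hq1 x) (hq'1 x)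
    _ = ∑ x, min (p x) (p' x) * tvDist (q x) (q' x) + tvDist p p' := by
        rw [sum_add_distrib, tvDist, mul_sum]
        congr 1
        exact sum_congr rfl fun x _ => by ring

lemma tvDist_prod_le_of_le {p p' : X → ℝ} {q q' : X → Y → ℝ} (hp0 : ∀ x, 0 ≤ p x)
    (hp'0 : ∀ x, 0 ≤ p' x) (hp1 : ∑ x, p x = 1) (hp'1 : ∑ x, p' x = 1)
    (hq0 : ∀ x y, 0 ≤ q x y) (hq'0 : ∀ x y, 0 ≤ q' x y)
    (hq1 : ∀ x, ∑ y, q x y = 1) (hq'1 : ∀ x, ∑ y, q' x y = 1) {ηX ηstar ηbar : ℝ}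
    (hX : tvDist p p' ≤ ηX) (hstar : ∑ x, p' x * tvDist (q x) (q' x) ≤ ηstar)
    (hbar : ∀ x, tvDist (q x) (q' x) ≤ ηbar) (hbar1 : ηbar ≤ 1) :
    tvDist (fun z : X × Y => p z.1 * q z.1 z.2) (fun z => p' z.1 * q' z.1 z.2)
      ≤ ηX + min ηstar ((1 - ηX) * ηbar) := by
  set s := ∑ x, min (p x) (p' x) * tvDist (q x) (q' x)
  have hs_star : s ≤ ηstar := (sum_le_sum fun x _ =>
    mul_le_mul_of_nonneg_right (min_le_right _ _) (tvDist_nonneg _ _)).trans hstar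
  have hs_bar : s ≤ (1 - tvDist p p') * ηbar := by
    rw [← sum_min_eq_one_sub_tvDist hp1 hp'1, sum_mul]
    exact sum_le_sum fun x _ => mul_le_mul_of_nonneg_left (hbar x) (le_min (hp0 x) (hp'0 x))
  calc _ ≤ s + tvDist p p' := tvDist_prod_le hp0 hp'0 hq0 hq'0 hq1 hq'1
    _ ≤ ηX + min ηstar ((1 - ηX) * ηbar) := by
      rw [← min_add_add_left]
      exact le_min (by linarith)
        (by nlinarith [mul_nonneg (sub_nonneg.2 hX) (sub_nonneg.2 hbar1)])

end Product
section Diameters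

variable {X Y I J : Type*}

-- `η_X`, `η*_{Y|X}` and `η̄_{Y|X}`

noncomputable def marginalDiam [Fintype X] (p : I → X → ℝ) : ℝ := ⨆ i, ⨆ i', tvDist (p i) (p i')

noncomputable def avgKernelDiam [Fintype X] [Fintype Y] (p : I → X → ℝ) (q : J → X → Y → ℝ) : ℝ :=
  ⨆ i, ⨆ j, ⨆ j', ∑ x, p i x * tvDist (q j x) (q j' x)

noncomputable def maxKernelDiam [Fintype Y] (q : J → X → Y → ℝ) : ℝ :=
  ⨆ x, ⨆ j, ⨆ j', tvDist (q j x) (q j' x)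

lemma tvDist_le_marginalDiam [Fintype X] [Finite I] (p : I → X → ℝ) (i i' : I) :
    tvDist (p i) (p i') ≤ marginalDiam p :=
  le_ciSup_of_le (Finite.bddAbove_range _) i
    (le_ciSup (Finite.bddAbove_range fun i' => tvDist (p i) (p i')) i')

lemma marginalDiam_nonneg [Fintype X] (p : I → X → ℝ) : 0 ≤ marginalDiam p :=
  Real.iSup_nonneg fun _ => Real.iSup_nonneg fun _ => tvDist_nonneg _ _

lemma marginalDiam_le_one [Fintype X] {p : I → X → ℝ} (hp0 : ∀ i x, 0 ≤ p i x)
    (hp1 : ∀ i, ∑ x, p i x = 1) : marginalDiam p ≤ 1 :=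
  Real.iSup_le (fun i => Real.iSup_le (fun i' =>
    tvDist_le_one (hp0 i) (hp0 i') (hp1 i) (hp1 i')) zero_le_one) zero_le_one

lemma sum_mul_tvDist_le_avgKernelDiam [Fintype X] [Fintype Y] [Finite I] [Finite J]
    (p : I → X → ℝ) (q : J → X → Y → ℝ) (i : I) (j j' : J) :
    ∑ x, p i x * tvDist (q j x) (q j' x) ≤ avgKernelDiam p q :=
  le_ciSup_of_le (Finite.bddAbove_range _) i <| le_ciSup_of_le (Finite.bddAbove_range _) j
    (le_ciSup (Finite.bddAbove_range fun j' => ∑ x, p i x * tvDist (q j x) (q j' x)) j')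

lemma avgKernelDiam_nonneg [Fintype X] [Fintype Y] {p : I → X → ℝ} (hp0 : ∀ i x, 0 ≤ p i x)
    (q : J → X → Y → ℝ) : 0 ≤ avgKernelDiam p q :=
  Real.iSup_nonneg fun i => Real.iSup_nonneg fun _ => Real.iSup_nonneg fun _ =>
    sum_nonneg fun x _ => mul_nonneg (hp0 i x) (tvDist_nonneg _ _)

lemma tvDist_le_maxKernelDiam [Fintype Y] [Finite X] [Finite J] (q : J → X → Y → ℝ) (x : X)
    (j j' : J) : tvDist (q j x) (q j' x) ≤ maxKernelDiam q :=
  le_ciSup_of_le (Finite.bddAbove_range _) x <| le_ciSup_of_le (Finite.bddAbove_range _) j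
    (le_ciSup (Finite.bddAbove_range fun j' => tvDist (q j x) (q j' x)) j')

lemma maxKernelDiam_nonneg [Fintype Y] (q : J → X → Y → ℝ) : 0 ≤ maxKernelDiam q :=
  Real.iSup_nonneg fun _ => Real.iSup_nonneg fun _ => Real.iSup_nonneg fun _ => tvDist_nonneg _ _

lemma maxKernelDiam_le_one [Fintype Y] {q : J → X → Y → ℝ} (hq0 : ∀ j x y, 0 ≤ q j x y)
    (hq1 : ∀ j x, ∑ y, q j x y = 1) : maxKernelDiam q ≤ 1 :=
  Real.iSup_le (fun x => Real.iSup_le (fun j => Real.iSup_le (fun j' =>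
    tvDist_le_one (hq0 j x) (hq0 j' x) (hq1 j x) (hq1 j' x)) zero_le_one) zero_le_one) zero_le_one

end Diameters

theorem diameter_upper_bound_general
    {X Y I J : Type} [Fintype X] [Fintype Y] [Fintype I] [Fintype J]
    (p : I → X → ℝ) (q : J → X → Y → ℝ)
    (hp0 : ∀ i x, 0 ≤ p i x) (hp1 : ∀ i, ∑ x, p i x = 1)
    (hq0 : ∀ j x y, 0 ≤ q j x y) (hq1 : ∀ j x, ∑ y, q j x y = 1) :
    let P : I → J → X × Y → ℝ := fun i j z => p i z.1 * q j z.1 z.2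
    let C : Set (X × Y → ℝ) :=
      {μ | ∃ w : I → J → ℝ, (∀ i j, 0 ≤ w i j) ∧ (∑ i, ∑ j, w i j = 1) ∧
            μ = fun z => ∑ i, ∑ j, w i j * P i j z}
    let ηX : ℝ := ⨆ i, ⨆ i', (1/2) * ∑ x, |p i x - p i' x|
    let ηstar : ℝ := ⨆ i, ⨆ j, ⨆ j', ∑ x, p i x * ((1/2) * ∑ y, |q j x y - q j' x y|)
    let ηbar : ℝ := ⨆ x, ⨆ j, ⨆ j', (1/2) * ∑ y, |q j x y - q j' x y|
    sSup {d | ∃ μ ∈ C, ∃ ν ∈ C, (1/2) * ∑ z, |μ z - ν z| = d}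
      ≤ ηX + min ηstar ((1 - ηX) * ηbar) := by
  change sSup {d | ∃ μ ∈ _, ∃ ν ∈ _, tvDist μ ν = d}
    ≤ marginalDiam p + min (avgKernelDiam p q) ((1 - marginalDiam p) * maxKernelDiam q)
  set B := marginalDiam p + min (avgKernelDiam p q) ((1 - marginalDiam p) * maxKernelDiam q)
  have hpair : ∀ k k' : I × J, tvDist (fun z : X × Y => p k.1 z.1 * q k.2 z.1 z.2)
      (fun z => p k'.1 z.1 * q k'.2 z.1 z.2) ≤ B := fun k k' =>
    tvDist_prod_le_of_le (hp0 k.1) (hp0 k'.1) (hp1 k.1) (hp1 k'.1) (hq0 k.2) (hq0 k'.2)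
      (hq1 k.2) (hq1 k'.2) (tvDist_le_marginalDiam p k.1 k'.1)
      (sum_mul_tvDist_le_avgKernelDiam p q k'.1 k.2 k'.2)
      (fun x => tvDist_le_maxKernelDiam q x k.2 k'.2) (maxKernelDiam_le_one hq0 hq1)
  have hB : 0 ≤ B := add_nonneg (marginalDiam_nonneg p) (le_min (avgKernelDiam_nonneg hp0 q)
    (mul_nonneg (sub_nonneg.2 (marginalDiam_le_one hp0 hp1)) (maxKernelDiam_nonneg q)))
  refine Real.sSup_le ?_ hB
  rintro _ ⟨μ, ⟨w, hw0, hw1, rfl⟩, ν, ⟨w', hw'0, hw'1, rfl⟩, rfl⟩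
  have hmix := tvDist_mix_le_of_forall_le (W := fun k : I × J => w k.1 k.2)
    (W' := fun k => w' k.1 k.2) (fun k => hw0 k.1 k.2) (by rwa [Fintype.sum_prod_type])
    (fun k => hw'0 k.1 k.2) (by rwa [Fintype.sum_prod_type]) _ hpair
  simpa only [Fintype.sum_prod_type] using hmix

/-- Diameter upper bound: diam_TV(P) ≤ η_X + min(η*_{Y|X}, (1 − η_X)·η̄_{Y|X}). -/
theorem diameter_upper_bound
    {X Y I J : Type} [Fintype X] [Fintype Y] [Fintype I] [Fintype J]
    [Nonempty I] [Nonempty J]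
    (p : I → X → ℝ) (q : J → X → Y → ℝ)
    (hp0 : ∀ i x, 0 ≤ p i x) (hp1 : ∀ i, ∑ x, p i x = 1)
    (hq0 : ∀ j x y, 0 ≤ q j x y) (hq1 : ∀ j x, ∑ y, q j x y = 1) :
    let P : I → J → X × Y → ℝ := fun i j z => p i z.1 * q j z.1 z.2
    let C : Set (X × Y → ℝ) :=
      {μ | ∃ w : I → J → ℝ, (∀ i j, 0 ≤ w i j) ∧ (∑ i, ∑ j, w i j = 1) ∧
            μ = fun z => ∑ i, ∑ j, w i j * P i j z}
    let ηX : ℝ := ⨆ i, ⨆ i', (1/2) * ∑ x, |p i x - p i' x|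
    let ηstar : ℝ := ⨆ i, ⨆ j, ⨆ j', ∑ x, p i x * ((1/2) * ∑ y, |q j x y - q j' x y|)
    let ηbar : ℝ := ⨆ x, ⨆ j, ⨆ j', (1/2) * ∑ y, |q j x y - q j' x y|
    sSup {d | ∃ μ ∈ C, ∃ ν ∈ C, (1/2) * ∑ z, |μ z - ν z| = d}
      ≤ ηX + min ηstar ((1 - ηX) * ηbar) :=
  diameter_upper_bound_general p q hp0 hp1 hq0 hq1
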